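/- arXiv:1301.2793 — 3 statements merged into one kernel-verified Lean document; each statement's English description precedes it below -/
import Mathlib

section
/- If the least Φ-closed subset I(Φ) of B exists, then sSup I(Φ) is the least fixed point of Γ_Φ: Γ_Φ(sSup I(Φ)) = sSup I(Φ), and for any a with Γ_Φ(a) = a one has sSup I(Φ) ≤ a. -/
def cL {L : Type*} [CompleteLattice L] (B : Set L) (Y : Set L) : Set L :=
  {b | b ∈ B ∧ ∃ U ⊆ Y, b ≤ sSup U}

def PhiClosed {L : Type*} [CompleteLattice L] (B : Set L) (Φ : Set (L × L))
    (Y : Set L) : Prop :=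
  Y ⊆ B ∧ cL B Y = Y ∧ ∀ b a, (b, a) ∈ Φ → {b' ∈ B | b' ≤ a} ⊆ Y → b ∈ Y

def GammaPhi {L : Type*} [CompleteLattice L] (B : Set L) (Φ : Set (L × L))
    (a : L) : L :=
  sSup {b ∈ B | ∃ a', (b, a') ∈ Φ ∧ a' ≤ a}

lemma gamma_mono {L : Type*} [CompleteLattice L] (B : Set L) (Φ : Set (L × L))
    {a a' : L} (h : a ≤ a') : GammaPhi B Φ a ≤ GammaPhi B Φ a' := by
  apply sSup_le_sSup
  rintro b ⟨hbB, c, hbc, hc⟩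
  exact ⟨hbB, c, hbc, hc.trans h⟩

lemma sSupI_le {L : Type*} [CompleteLattice L] (B : Set L)
    (hgen : ∀ x : L, x = sSup {b ∈ B | b ≤ x})
    (Φ : Set (L × L)) (I : Set L)
    (hI : PhiClosed B Φ I) (hleast : ∀ Y, PhiClosed B Φ Y → I ⊆ Y)
    (a : L) (ha : GammaPhi B Φ a ≤ a) : sSup I ≤ a := by
  obtain ⟨hIB, hIcL, hIphi⟩ := hI
  set Z : Set L := {b ∈ I | b ≤ a} with hZ
  have hZclosed : PhiClosed B Φ Z := by
    refine ⟨fun b hb => hIB hb.1, ?_, ?_⟩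
    · ext b
      constructor
      · rintro ⟨hbB, U, hU, hle⟩
        have hba : b ≤ a := hle.trans (sSup_le fun u hu => (hU hu).2)
        have hbI : b ∈ I := by
          rw [← hIcL]
          exact ⟨hbB, U, fun u hu => (hU hu).1, hle⟩
        exact ⟨hbI, hba⟩
      · rintro ⟨hbI, hba⟩
        exact ⟨hIB hbI, Z, le_refl _, le_sSup ⟨hbI, hba⟩⟩
    · intro b a' hba' hsub
      have ha' : a' ≤ a := by
        rw [hgen a']
        exact sSup_le fun b' hb' => (hsub hb').2
      have hbI : b ∈ I := hIphi b a' hba' (fun b' hb' => (hsub hb').1)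
      have hba : b ≤ a := by
        refine le_trans ?_ ha
        exact le_sSup (show b ∈ {b ∈ B | ∃ c, (b, c) ∈ Φ ∧ c ≤ a} from
          ⟨hIB hbI, a', hba', ha'⟩)
      exact ⟨hbI, hba⟩
  have := hleast Z hZclosed
  exact sSup_le fun b hb => (this hb).2

theorem least_fixed_point_of_least_closed {L : Type*} [CompleteLattice L] (B : Set L)
    (hgen : ∀ x : L, x = sSup {b ∈ B | b ≤ x})
    (Φ : Set (L × L)) (I : Set L)
    (hI : PhiClosed B Φ I) (hleast : ∀ Y, PhiClosed B Φ Y → I ⊆ Y) :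
    GammaPhi B Φ (sSup I) = sSup I ∧
    ∀ a : L, GammaPhi B Φ a = a → sSup I ≤ a := by
  obtain ⟨hIB, hIcL, hIphi⟩ := hI
  have h1 : GammaPhi B Φ (sSup I) ≤ sSup I := by
    apply sSup_le
    rintro b ⟨hbB, a', hba', ha'⟩
    have hbI : b ∈ I := by
      apply hIphi b a' hba'
      rintro b' ⟨hb'B, hb'⟩
      rw [← hIcL]
      exact ⟨hb'B, I, le_refl _, hb'.trans ha'⟩
    exact le_sSup hbI
  have h2 : sSup I ≤ GammaPhi B Φ (sSup I) :=
    sSupI_le B hgen Φ I ⟨hIB, hIcL, hIphi⟩ hleast _ (gamma_mono B Φ h1)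
  exact ⟨le_antisymm h1 h2, fun a ha =>
    sSupI_le B hgen Φ I ⟨hIB, hIcL, hIphi⟩ hleast a ha.le⟩
end

section
/- If Y ⊆ B is c_L-closed and Φ-closed, and a = sSup Y, then Γ_Φ(a) ≤ a. -/
theorem gammaPhi_sSup_le_of_phiClosed {L : Type*} [CompleteLattice L] (B : Set L)
    (hgen : ∀ x : L, x = sSup {b ∈ B | b ≤ x})
    (Φ : Set (L × L)) (Y : Set L)
    (hY : PhiClosed B Φ Y) :
    GammaPhi B Φ (sSup Y) ≤ sSup Y := by
  obtain ⟨hYB, hcL, hΦ⟩ := hY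
  apply sSup_le
  rintro b ⟨hbB, a', hba', ha'⟩
  apply le_sSup
  apply hΦ b a' hba'
  rintro b' ⟨hb'B, hb'a'⟩
  rw [← hcL]
  exact ⟨hb'B, Y, le_refl _, hb'a'.trans ha'⟩
end

section
/- Tarski's fixed point theorem via inductive definitions: for any monotone Γ on a complete lattice L with generating set B, the element sSup(⋂{Y ⊆ B | Y is Φ_Γ-closed}) is the least fixed point of Γ, where Φ_Γ = {(b,a) | b ∈ B, b ≤ Γ a}. -/
theorem tarski_via_inductive_definitions {L : Type*} [CompleteLattice L] (B : Set L)
    (hgen : ∀ x : L, x = sSup {b ∈ B | b ≤ x})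
    (Γ : L → L) (hΓ : Monotone Γ) :
    Γ (sSup (⋂₀ {Y | PhiClosed B {p : L × L | p.1 ∈ B ∧ p.1 ≤ Γ p.2} Y})) =
      sSup (⋂₀ {Y | PhiClosed B {p : L × L | p.1 ∈ B ∧ p.1 ≤ Γ p.2} Y}) ∧
    ∀ a : L, Γ a = a →
      sSup (⋂₀ {Y | PhiClosed B {p : L × L | p.1 ∈ B ∧ p.1 ≤ Γ p.2} Y}) ≤ a := by
  set Φ : Set (L × L) := {p : L × L | p.1 ∈ B ∧ p.1 ≤ Γ p.2} with hΦ
  set I : Set L := ⋂₀ {Y | PhiClosed B Φ Y} with hI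
  set m : L := sSup I with hm
  have hYa : ∀ a : L, Γ a ≤ a → PhiClosed B Φ {b ∈ B | b ≤ a} := by
    intro a ha
    refine ⟨fun b hb => hb.1, ?_, ?_⟩
    · ext b
      constructor
      · rintro ⟨hbB, U, hU, hb⟩
        exact ⟨hbB, hb.trans (sSup_le fun u hu => (hU hu).2)⟩
      · rintro ⟨hbB, hb⟩
        exact ⟨hbB, {b}, by simpa using ⟨hbB, hb⟩, by simp⟩
    · rintro b a' ⟨hbB, hb⟩ hsub
      refine ⟨hbB, hb.trans (le_trans (hΓ ?_) ha)⟩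
      calc a' = sSup {b' ∈ B | b' ≤ a'} := hgen a'
        _ ≤ sSup {b ∈ B | b ≤ a} := sSup_le_sSup hsub
        _ ≤ a := sSup_le fun u hu => hu.2
  -- I is closed
  have hIcl : PhiClosed B Φ I := by
    have hIsub : I ⊆ B := by
      intro b hb
      exact (hb {b ∈ B | b ≤ (⊤ : L)} (hYa ⊤ le_top)).1
    refine ⟨hIsub, ?_, ?_⟩
    · ext b
      constructor
      · rintro ⟨hbB, U, hU, hb⟩
        intro Y hY
        rw [← hY.2.1]
        exact ⟨hbB, U, hU.trans (Set.sInter_subset_of_mem hY), hb⟩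
      · rintro hb
        exact ⟨hIsub hb, {b}, by simpa using hb, by simp⟩
    · rintro b a' hmem hsub
      intro Y hY
      exact hY.2.2 b a' hmem (hsub.trans (Set.sInter_subset_of_mem hY))
  -- members of B below m are in I
  have hbm : ∀ b ∈ B, b ≤ m → b ∈ I := by
    intro b hbB hb
    rw [← hIcl.2.1]
    exact ⟨hbB, I, le_refl _, hb⟩
  -- Γ m ≤ m
  have h1 : Γ m ≤ m := by
    conv_lhs => rw [hgen (Γ m)]
    refine sSup_le ?_
    rintro b ⟨hbB, hb⟩
    refine le_sSup (hIcl.2.2 b m ⟨hbB, hb⟩ fun b' hb' => hbm b' hb'.1 hb'.2)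
  -- m ≤ Γ m
  have h2 : m ≤ Γ m := by
    have hYcl := hYa (Γ m) (hΓ h1)
    calc m ≤ sSup {b ∈ B | b ≤ Γ m} :=
          sSup_le_sSup (Set.sInter_subset_of_mem hYcl)
      _ = Γ m := (hgen (Γ m)).symm
  refine ⟨le_antisymm h1 h2, ?_⟩
  intro a ha
  calc m ≤ sSup {b ∈ B | b ≤ a} :=
        sSup_le_sSup (Set.sInter_subset_of_mem (hYa a ha.le))
    _ = a := (hgen a).symm
end
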